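/- With the stone monodromies S = yxy, C = xyxyx, L = xy², R = y²x in PSL(2,ℤ) = ⟨x, y : x² = y³ = 1⟩, the number of equivalence classes (up to cyclic rotation and up to order-reversal combined with the exchange L ↔ R) of length-6 words with product equal to the identity and containing exactly 2 letters from {L, R} is exactly 4. -/
import Mathlib


inductive Stone : Type
  | C | S | R | L
deriving DecidableEq

/-- stone monodromies as words in x, y (integer matrices): S = yxy, C = xyxyx,
R = y²x, L = xy². -/
def stoneMat : Stone → Matrix (Fin 2) (Fin 2) ℤ
  | .S => !![0,1;-1,1] * !![0,1;-1,0] * !![0,1;-1,1]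
  | .C => !![0,1;-1,0] * !![0,1;-1,1] * !![0,1;-1,0] * !![0,1;-1,1] * !![0,1;-1,0]
  | .R => !![0,1;-1,1] ^ 2 * !![0,1;-1,0]
  | .L => !![0,1;-1,0] * !![0,1;-1,1] ^ 2

/-- the exchange L ↔ R (fixing S and C). -/
def swapLR : Stone → Stone
  | .R => .L
  | .L => .R
  | .S => .S
  | .C => .C

/-- order-reversal combined with the exchange L ↔ R. -/
def revSwap (l : List Stone) : List Stone := (l.map swapLR).reverse

/-- equivalence of words: cyclic rotation, possibly combined with
order-reversal and the exchange L ↔ R. -/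
def wordEquiv (u v : List Stone) : Prop :=
  ∃ k, v = u.rotate k ∨ v = (revSwap u).rotate k

/-- the word has identity monodromy in PSL(2,ℤ), i.e. its product is ±I. -/
def idMonodromy (l : List Stone) : Prop :=
  (l.map stoneMat).prod = 1 ∨ (l.map stoneMat).prod = -1

namespace Stmt15Aux

lemma swapLR_swapLR (s : Stone) : swapLR (swapLR s) = s := by cases s <;> rfl

lemma revSwap_revSwap (l : List Stone) : revSwap (revSwap l) = l := by
  have h : swapLR ∘ swapLR = id := funext swapLR_swapLR
  simp [revSwap, List.map_reverse, List.map_map, h]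

lemma revSwap_congr {u v : List Stone} (h : u ~r v) : revSwap u ~r revSwap v :=
  (h.map swapLR).reverse

lemma wordEquiv_iff (u v : List Stone) :
    wordEquiv u v ↔ u ~r v ∨ revSwap u ~r v := by
  constructor
  · rintro ⟨k, h | h⟩
    · exact Or.inl ⟨k, h.symm⟩
    · exact Or.inr ⟨k, h.symm⟩
  · rintro (⟨k, h⟩ | ⟨k, h⟩)
    · exact ⟨k, Or.inl h.symm⟩
    · exact ⟨k, Or.inr h.symm⟩

instance decWE (u v : List Stone) : Decidable (wordEquiv u v) :=
  decidable_of_iff _ (wordEquiv_iff u v).symm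

instance : Fintype Stone :=
  ⟨{.C, .S, .R, .L}, by intro x; cases x <;> decide⟩

instance decIM (l : List Stone) : Decidable (idMonodromy l) := by
  unfold idMonodromy; infer_instance

lemma we_refl (u : List Stone) : wordEquiv u u :=
  (wordEquiv_iff u u).2 (Or.inl (List.IsRotated.refl u))

lemma we_symm {u v : List Stone} (h : wordEquiv u v) : wordEquiv v u := by
  rw [wordEquiv_iff] at h ⊢
  rcases h with h | h
  · exact Or.inl h.symm
  · have : u ~r revSwap v := by
      have := revSwap_congr h
      rwa [revSwap_revSwap] at this
    exact Or.inr this.symm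

lemma we_trans {u v w : List Stone} (h1 : wordEquiv u v) (h2 : wordEquiv v w) :
    wordEquiv u w := by
  rw [wordEquiv_iff] at h1 h2 ⊢
  rcases h1 with h1 | h1 <;> rcases h2 with h2 | h2
  · exact Or.inl (h1.trans h2)
  · exact Or.inr ((revSwap_congr h1).trans h2)
  · exact Or.inr (h1.trans h2)
  · have : u ~r revSwap v := by
      have := revSwap_congr h1
      rwa [revSwap_revSwap] at this
    exact Or.inl (this.trans h2)

abbrev V := {l : List Stone // l.length = 6 ∧ idMonodromy l ∧
    l.countP (fun s => s = Stone.R ∨ s = Stone.L) = 2}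

def mySetoid : Setoid V :=
  ⟨fun a b => wordEquiv a.1 b.1,
    fun a => we_refl a.1, we_symm, we_trans⟩

def r0 : List Stone := [.C,.C,.C,.L,.C,.R]
def r1 : List Stone := [.C,.C,.L,.C,.C,.L]
def r2 : List Stone := [.L,.S,.S,.S,.R,.S]
def r3 : List Stone := [.L,.S,.S,.L,.S,.S]

abbrev S6 := Stone × Stone × Stone × Stone × Stone × Stone

def toList : S6 → List Stone
  | (a,b,c,d,e,f) => [a,b,c,d,e,f]

lemma exists_toList (l : List Stone) (h : l.length = 6) : ∃ t : S6, toList t = l := by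
  rcases l with _ | ⟨a, _ | ⟨b, _ | ⟨c, _ | ⟨d, _ | ⟨e, _ | ⟨f, _ | ⟨g, l⟩⟩⟩⟩⟩⟩⟩ <;>
    simp only [List.length] at h <;> try omega
  exact ⟨(a,b,c,d,e,f), rfl⟩

set_option maxRecDepth 10000 in
lemma classify : ∀ a b c d e f : Stone,
    [a,b,c,d,e,f].countP (fun s => s = Stone.R ∨ s = Stone.L) = 2 →
    idMonodromy [a,b,c,d,e,f] →
    wordEquiv [a,b,c,d,e,f] r0 ∨ wordEquiv [a,b,c,d,e,f] r1 ∨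
      wordEquiv [a,b,c,d,e,f] r2 ∨ wordEquiv [a,b,c,d,e,f] r3 := by decide

lemma classify' (a : V) :
    wordEquiv a.1 r0 ∨ wordEquiv a.1 r1 ∨ wordEquiv a.1 r2 ∨ wordEquiv a.1 r3 := by
  obtain ⟨⟨x1,x2,x3,x4,x5,x6⟩, ht⟩ := exists_toList a.1 a.2.1
  simp only [toList] at ht
  have := classify x1 x2 x3 x4 x5 x6 (by rw [ht]; exact a.2.2.2)
    (by rw [ht]; exact a.2.2.1)
  rwa [ht] at this

def fV (a : V) : Fin 4 :=
  if wordEquiv a.1 r0 then 0 else if wordEquiv a.1 r1 then 1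
    else if wordEquiv a.1 r2 then 2 else 3

lemma fV_resp {a b : V} (h : wordEquiv a.1 b.1) : fV a = fV b := by
  have e0 : wordEquiv a.1 r0 ↔ wordEquiv b.1 r0 :=
    ⟨fun h' => we_trans (we_symm h) h', fun h' => we_trans h h'⟩
  have e1 : wordEquiv a.1 r1 ↔ wordEquiv b.1 r1 :=
    ⟨fun h' => we_trans (we_symm h) h', fun h' => we_trans h h'⟩
  have e2 : wordEquiv a.1 r2 ↔ wordEquiv b.1 r2 :=
    ⟨fun h' => we_trans (we_symm h) h', fun h' => we_trans h h'⟩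
  simp only [fV, e0, e1, e2]

lemma we_rep (a : V) : wordEquiv a.1 (if fV a = 0 then r0 else if fV a = 1 then r1
    else if fV a = 2 then r2 else r3) := by
  by_cases h0 : wordEquiv a.1 r0
  · simp [fV, h0]
  by_cases h1 : wordEquiv a.1 r1
  · simp [fV, h0, h1]
  by_cases h2 : wordEquiv a.1 r2
  · simp [fV, h0, h1, h2]
  · have h := classify' a
    simp only [h0, h1, h2, false_or] at h
    simp [fV, h0, h1, h2, h]

def F : Quotient mySetoid → Fin 4 :=
  Quotient.lift fV (fun _ _ h => fV_resp h)

lemma F_inj : Function.Injective F := by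
  intro x y
  induction x using Quotient.ind
  induction y using Quotient.ind
  rename_i a b
  intro h
  have h' : fV a = fV b := h
  have ha := we_rep a
  have hb := we_rep b
  rw [h'] at ha
  exact Quotient.sound (we_trans ha (we_symm hb))

lemma valid_r0 : r0.length = 6 ∧ idMonodromy r0 ∧
    r0.countP (fun s => s = Stone.R ∨ s = Stone.L) = 2 := by decide
lemma valid_r1 : r1.length = 6 ∧ idMonodromy r1 ∧
    r1.countP (fun s => s = Stone.R ∨ s = Stone.L) = 2 := by decide
lemma valid_r2 : r2.length = 6 ∧ idMonodromy r2 ∧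
    r2.countP (fun s => s = Stone.R ∨ s = Stone.L) = 2 := by decide
lemma valid_r3 : r3.length = 6 ∧ idMonodromy r3 ∧
    r3.countP (fun s => s = Stone.R ∨ s = Stone.L) = 2 := by decide

lemma F_surj : Function.Surjective F := by
  intro i
  fin_cases i
  · exact ⟨⟦⟨r0, valid_r0⟩⟧, by simp [F, fV, we_refl]⟩
  · refine ⟨⟦⟨r1, valid_r1⟩⟧, ?_⟩
    have h0 : ¬ wordEquiv r1 r0 := by decide
    simp [F, fV, h0, we_refl]
  · refine ⟨⟦⟨r2, valid_r2⟩⟧, ?_⟩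
    have h0 : ¬ wordEquiv r2 r0 := by decide
    have h1 : ¬ wordEquiv r2 r1 := by decide
    simp [F, fV, h0, h1, we_refl]
  · refine ⟨⟦⟨r3, valid_r3⟩⟧, ?_⟩
    have h0 : ¬ wordEquiv r3 r0 := by decide
    have h1 : ¬ wordEquiv r3 r1 := by decide
    have h2 : ¬ wordEquiv r3 r2 := by decide
    simp [F, fV, h0, h1, h2, we_refl]

end Stmt15Aux

theorem stmt15 :
    ∃ s : Setoid {l : List Stone // l.length = 6 ∧ idMonodromy l ∧ l.countP (fun s => s = Stone.R ∨ s = Stone.L) = 2},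
      (∀ a b, s.r a b ↔ wordEquiv a.1 b.1) ∧
      Nat.card (Quotient s) = 4 := by
  refine ⟨Stmt15Aux.mySetoid, fun a b => Iff.rfl, ?_⟩
  have hb : Function.Bijective Stmt15Aux.F := ⟨Stmt15Aux.F_inj, Stmt15Aux.F_surj⟩
  rw [Nat.card_eq_of_bijective _ hb]
  simp
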